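/- arXiv:1401.7131 — 2 statements merged into one kernel-verified Lean document; each statement's English description precedes it below -/
import Mathlib

section
/- Let P ⊂ ℝ² be a bounded open set, ε > 0, S_ε = { z ∈ P : dist(z,∂P) = ε }. Let p, p' ∈ ∂P, z ∈ m_ε(p), z' ∈ m_ε(p') with d(p,z) = ε and d(p',z') = ε, and suppose the open segments (p,z) and (p',z') intersect at a single point q with q ∉ {p, z, p', z'} and z ≠ z'. Then, assuming without loss of generality d(q,z) ≥ d(q,z'), the path from p through q to z' has length d(p,q) + d(q,z') ≤ d(p,z), yielding d(p, z') < d(p, z) unless p, q, z' are collinear; in the non-collinear case this contradicts z ∈ m_ε(p). Consequently, segments realizing shortest distances from boundary points to S_ε intersect only at common endpoints. -/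
/-! If the open segments `(p, z)` and `(p', z')` meet at `q`, say with `d(q, z') ≤ d(q, z)`, then
`d(p, z') ≤ d(p, q) + d(q, z') ≤ d(p, q) + d(q, z) = d(p, z)`. Since `z` is nearest to `p`, all of these
are equalities; by strict convexity the first one puts `q` between `p` and `z'`, so `z` and `z'` lie on
the same ray from `q` at the same distance, i.e. `z = z'`. -/

open Metric Set

noncomputable section

abbrev E2 := EuclideanSpace ℝ (Fin 2)

section

variable {V : Type*} [NormedAddCommGroup V] [NormedSpace ℝ V]

theorem eq_of_wbtw_of_wbtw_of_dist_eq {p q z z' : V} (h : Wbtw ℝ p q z) (h' : Wbtw ℝ p q z')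
    (hqp : q ≠ p) (hdist : dist q z = dist q z') : z = z' := by
  have hray : SameRay ℝ (q - p) (z - q) := by simpa using wbtw_iff_sameRay_vsub.mp h
  have hray' : SameRay ℝ (q - p) (z' - q) := by simpa using wbtw_iff_sameRay_vsub.mp h'
  have hsame : SameRay ℝ (z - q) (z' - q) :=
    hray.symm.trans hray' fun h0 => absurd (sub_eq_zero.mp h0) hqp
  have hnorm : ‖z - q‖ = ‖z' - q‖ := by
    rw [← dist_eq_norm, ← dist_eq_norm, dist_comm, hdist, dist_comm]
  simpa using hsame.eq_of_norm_eq hnorm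

variable [StrictConvexSpace ℝ V]

theorem eq_of_wbtw_of_dist_eq_infDist {S : Set V} {p q z z' : V} (hz'S : z' ∈ S)
    (hzmin : dist p z = infDist p S) (h : Wbtw ℝ p q z) (hqp : q ≠ p)
    (hle : dist q z' ≤ dist q z) : z = z' := by
  have hpqz : dist p q + dist q z = dist p z := dist_add_dist_eq_iff.mpr h
  have hmin : dist p z ≤ dist p z' := hzmin ▸ infDist_le_dist_of_mem hz'S
  have htri : dist p z' ≤ dist p q + dist q z' := dist_triangle _ _ _
  have hpqz' : dist p q + dist q z' = dist p z' := by linarith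
  exact eq_of_wbtw_of_wbtw_of_dist_eq h (dist_add_dist_eq_iff.mp hpqz') hqp (by linarith)

end

theorem stmt10_general (S : Set E2)
    (p p' z z' : E2)
    (hzS : z ∈ S) (hz'S : z' ∈ S)
    (hzmin : dist p z = Metric.infDist p S) (hz'min : dist p' z' = Metric.infDist p' S)
    (hzz' : z ≠ z')
    (q : E2) (hq1 : q ∈ openSegment ℝ p z) (hq2 : q ∈ openSegment ℝ p' z')
    (hqne : q ∉ ({p, z, p', z'} : Set E2)) :
    False := by
  simp only [mem_insert_iff, mem_singleton_iff, not_or] at hqne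
  obtain ⟨hqp, -, hqp', -⟩ := hqne
  have hw : Wbtw ℝ p q z := mem_segment_iff_wbtw.mp (openSegment_subset_segment _ _ _ hq1)
  have hw' : Wbtw ℝ p' q z' := mem_segment_iff_wbtw.mp (openSegment_subset_segment _ _ _ hq2)
  rcases le_total (dist q z') (dist q z) with h | h
  · exact hzz' (eq_of_wbtw_of_dist_eq_infDist hz'S hzmin hw hqp h)
  · exact hzz' (eq_of_wbtw_of_dist_eq_infDist hzS hz'min hw' hqp' h).symm

theorem stmt10 (P : Set E2) (hP : IsOpen P) (hPb : Bornology.IsBounded P) (ε : ℝ) (hε : 0 < ε)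
    (S : Set E2) (hS : S = {z | z ∈ P ∧ Metric.infDist z (frontier P) = ε})
    (p p' z z' : E2) (hp : p ∈ frontier P) (hp' : p' ∈ frontier P)
    (hzS : z ∈ S) (hz'S : z' ∈ S)
    (hzmin : dist p z = Metric.infDist p S) (hz'min : dist p' z' = Metric.infDist p' S)
    (hdz : dist p z = ε) (hdz' : dist p' z' = ε) (hzz' : z ≠ z')
    (q : E2) (hq1 : q ∈ openSegment ℝ p z) (hq2 : q ∈ openSegment ℝ p' z')
    (hqne : q ∉ ({p, z, p', z'} : Set E2)) :
    False :=
  stmt10_general S p p' z z' hzS hz'S hzmin hz'min hzz' q hq1 hq2 hqne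
end
end

section
/- Let γ : [0, L] → ℝ² be a curve parametrized by arc length that is μ-locally η-Lipschitz in the sense that for any s, t with d(γ(s), γ(t)) < μ, the arc-length distance between γ(s) and γ(t) along γ is at most η·d(γ(s), γ(t)). Suppose X ⊂ γ([0,L]) is a (μ/2)-net of γ([0,L]) of cardinality M′, and any two points of X can be joined along γ by a chain of points of X with consecutive Euclidean distances less than μ. Then any two points s, w of γ([0,L]) can be joined by a subcurve of γ of length at most (M′·η·μ + 2η·μ); consequently γ([0,L]) is the boundary of an η*-elementary set for η* = 2(M′η + 2η)·μ/μ₀ whenever all pairs of points are at distance at least μ₀ := μ/2 or within distance μ of each other. -/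
open Metric Set

noncomputable section

/-!
Pick a parameter `p x` for every net point `x ∈ X` and join two net points by an edge when they
are at Euclidean distance `< μ`. By the chain hypothesis this graph is connected, so any two net
points are joined by a path with fewer than `M'` edges, and along each edge the local Lipschitz
property bounds the arc-length distance by `η μ`. An arbitrary curve point lies within `μ / 2`
of a net point, hence within arc-length distance `η μ / 2` of its parameter, and the triangle
inequality for the arc-length distance on the closed curve gives the bound `M' η μ`.
-/

/-- Arc-length distance between parameters of a closed curve of length `L`; it is the distance
of the circle `ℝ / Lℤ` only for parameters in `[0, L]`. -/
def arcDist (L s t : ℝ) : ℝ := min |s - t| (L - |s - t|)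

lemma arcDist_self_le_zero (L s : ℝ) : arcDist L s s ≤ 0 := by
  simp [arcDist]

lemma arcDist_triangle {L s t w : ℝ} (hs : s ∈ Icc 0 L) (ht : t ∈ Icc 0 L)
    (hw : w ∈ Icc 0 L) : arcDist L s w ≤ arcDist L s t + arcDist L t w := by
  obtain ⟨hs0, hsL⟩ := hs
  obtain ⟨ht0, htL⟩ := ht
  obtain ⟨hw0, hwL⟩ := hw
  unfold arcDist
  rcases abs_cases (s - w) with ⟨e1, f1⟩ | ⟨e1, f1⟩ <;>
  rcases abs_cases (s - t) with ⟨e2, f2⟩ | ⟨e2, f2⟩ <;>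
  rcases abs_cases (t - w) with ⟨e3, f3⟩ | ⟨e3, f3⟩ <;>
  rw [e1, e2, e3] <;>
  simp only [min_def] <;>
  split_ifs <;>
  linarith

namespace SimpleGraph

variable {V : Type*} {G : SimpleGraph V}

lemma Walk.le_length_mul {d : V → V → ℝ} {C : ℝ} (hself : ∀ u, d u u ≤ 0)
    (htri : ∀ u v w, d u w ≤ d u v + d v w) (hadj : ∀ u v, G.Adj u v → d u v ≤ C) :
    ∀ {u v : V} (q : G.Walk u v), d u v ≤ q.length * C
  | _, _, .nil => by simpa using hself _
  | u, w, .cons (v := v) h q => by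
    push_cast [Walk.length_cons]
    linarith [htri u v w, hadj _ _ h, q.le_length_mul hself htri hadj]

lemma Reachable.le_card_sub_one_mul [Fintype V] {d : V → V → ℝ} {C : ℝ} (hC : 0 ≤ C)
    (hself : ∀ u, d u u ≤ 0) (htri : ∀ u v w, d u w ≤ d u v + d v w)
    (hadj : ∀ u v, G.Adj u v → d u v ≤ C) {u v : V} (huv : G.Reachable u v) :
    d u v ≤ (Fintype.card V - 1) * C := by
  classical
  obtain ⟨q⟩ := huv
  have hlen : (q.toPath.1.length : ℝ) + 1 ≤ Fintype.card V := by
    exact_mod_cast q.toPath.2.length_lt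
  calc d u v ≤ q.toPath.1.length * C := q.toPath.1.le_length_mul hself htri hadj
    _ ≤ (Fintype.card V - 1) * C := by gcongr; linarith

lemma reachable_fromRel_of_chain (r : V → V → Prop) {k : ℕ} (c : Fin (k + 1) → V)
    (hc : ∀ i : Fin k, r (c i.castSucc) (c i.succ)) :
    (fromRel r).Reachable (c 0) (c (Fin.last k)) := by
  suffices ∀ n : Fin (k + 1), (fromRel r).Reachable (c 0) (c n) from this _
  intro n
  induction n using Fin.induction with
  | zero => rfl
  | succ i ih =>
    refine ih.trans ?_
    by_cases h : c i.castSucc = c i.succ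
    · rw [h]
    · exact Adj.reachable ((fromRel_adj _ _ _).2 ⟨h, Or.inl (hc i)⟩)

end SimpleGraph

section Curve

variable {L μ η : ℝ} {γ : ℝ → E2}

def IsLocallyArcLipschitz (L μ η : ℝ) (γ : ℝ → E2) : Prop :=
  ∀ s ∈ Icc (0:ℝ) L, ∀ t ∈ Icc (0:ℝ) L,
    dist (γ s) (γ t) < μ → arcDist L s t ≤ η * dist (γ s) (γ t)

lemma IsLocallyArcLipschitz.arcDist_le (hlip : IsLocallyArcLipschitz L μ η γ) (hη : 0 ≤ η)
    {s t r : ℝ} (hs : s ∈ Icc 0 L) (ht : t ∈ Icc 0 L) (hr : r < μ)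
    (hst : dist (γ s) (γ t) ≤ r) : arcDist L s t ≤ η * r :=
  (hlip s hs t ht (hst.trans_lt hr)).trans (by gcongr)

lemma IsLocallyArcLipschitz.arcDist_le_of_chain (hlip : IsLocallyArcLipschitz L μ η γ)
    (hη : 0 ≤ η) (hμ : 0 ≤ μ) {X : Finset E2} {p : X → ℝ}
    (hp : ∀ x, p x ∈ Icc 0 L ∧ γ (p x) = x)
    (hchain : ∀ x ∈ X, ∀ y ∈ X, ∃ (k : ℕ) (c : Fin (k + 1) → E2),
      (∀ i, c i ∈ X) ∧ c 0 = x ∧ c (Fin.last k) = y ∧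
        ∀ i : Fin k, dist (c i.castSucc) (c i.succ) < μ)
    (x y : X) : arcDist L (p x) (p y) ≤ (X.card - 1) * (η * μ) := by
  let G := SimpleGraph.fromRel fun a b : X => dist (a : E2) b < μ
  have hreach : G.Reachable x y := by
    obtain ⟨k, c, hcX, hc0, hck, hstep⟩ := hchain x x.2 y y.2
    have := SimpleGraph.reachable_fromRel_of_chain (fun a b : X => dist (a : E2) b < μ)
      (fun i => ⟨c i, hcX i⟩) hstep
    rwa [show (⟨c 0, hcX 0⟩ : X) = x from Subtype.ext hc0,
      show (⟨c (Fin.last k), hcX _⟩ : X) = y from Subtype.ext hck] at this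
  have hadj : ∀ a b, G.Adj a b → arcDist L (p a) (p b) ≤ η * μ := by
    rintro a b ⟨-, hab⟩
    have hab : dist (γ (p a)) (γ (p b)) < μ := by
      rw [(hp a).2, (hp b).2]
      exact hab.elim id fun hba => (dist_comm (a : E2) b).trans_lt hba
    exact (hlip _ (hp a).1 _ (hp b).1 hab).trans (by gcongr)
  rw [← Fintype.card_coe X]
  exact hreach.le_card_sub_one_mul (d := fun a b => arcDist L (p a) (p b)) (mul_nonneg hη hμ)
    (fun a => arcDist_self_le_zero L _)
    (fun a b c => arcDist_triangle (hp a).1 (hp b).1 (hp c).1) hadj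

lemma IsLocallyArcLipschitz.arcDist_le_card_mul (hlip : IsLocallyArcLipschitz L μ η γ)
    (hη : 0 ≤ η) (hμ : 0 < μ) {X : Finset E2} (hXsub : (X : Set E2) ⊆ γ '' Icc 0 L)
    (hnet : ∀ p ∈ γ '' Icc 0 L, ∃ x ∈ X, dist p x ≤ μ / 2)
    (hchain : ∀ x ∈ X, ∀ y ∈ X, ∃ (k : ℕ) (c : Fin (k + 1) → E2),
      (∀ i, c i ∈ X) ∧ c 0 = x ∧ c (Fin.last k) = y ∧
        ∀ i : Fin k, dist (c i.castSucc) (c i.succ) < μ)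
    {s w : ℝ} (hs : s ∈ Icc 0 L) (hw : w ∈ Icc 0 L) :
    arcDist L s w ≤ X.card * (η * μ) := by
  choose p hp using fun x : X => hXsub x.2
  obtain ⟨x, hx, hsx⟩ := hnet _ ⟨s, hs, rfl⟩
  obtain ⟨y, hy, hwy⟩ := hnet _ ⟨w, hw, rfl⟩
  set a := p ⟨x, hx⟩
  set b := p ⟨y, hy⟩
  have hsa : arcDist L s a ≤ η * (μ / 2) :=
    hlip.arcDist_le hη hs (hp _).1 (half_lt_self hμ) (by rwa [(hp _).2])
  have hab : arcDist L a b ≤ (X.card - 1) * (η * μ) :=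
    hlip.arcDist_le_of_chain hη hμ.le hp hchain _ _
  have hbw : arcDist L b w ≤ η * (μ / 2) :=
    hlip.arcDist_le hη (hp _).1 hw (half_lt_self hμ) (by rwa [(hp _).2, dist_comm])
  linarith [arcDist_triangle hs (hp ⟨x, hx⟩).1 hw,
    arcDist_triangle (hp ⟨x, hx⟩).1 (hp ⟨y, hy⟩).1 hw]

end Curve

theorem stmt14_general (L μ η : ℝ) (hμ : 0 < μ) (hη : 0 < η)
    (γ : ℝ → E2)
    -- `γ` is parametrized by arc length and is `μ`-locally `η`-Lipschitz: the arc-length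
    -- distance along the (closed) curve between two points at Euclidean distance `< μ`
    -- is at most `η` times their Euclidean distance.
    (hlip : ∀ s ∈ Set.Icc (0:ℝ) L, ∀ t ∈ Set.Icc (0:ℝ) L,
      dist (γ s) (γ t) < μ → min |s - t| (L - |s - t|) ≤ η * dist (γ s) (γ t))
    (M' : ℕ) (X : Finset E2) (hcard : X.card = M')
    (hXsub : (X : Set E2) ⊆ γ '' Set.Icc 0 L)
    -- `X` is a `μ/2`-net of the curve
    (hnet : ∀ p ∈ γ '' Set.Icc 0 L, ∃ x ∈ X, dist p x ≤ μ / 2)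
    -- any two points of `X` are joined by a chain in `X` with steps `< μ`
    (hchain : ∀ x ∈ X, ∀ y ∈ X, ∃ (k : ℕ) (c : Fin (k + 1) → E2),
      (∀ i, c i ∈ X) ∧ c 0 = x ∧ c (Fin.last k) = y ∧
        ∀ i : Fin k, dist (c i.castSucc) (c i.succ) < μ) :
    -- any two points of the curve are joined along the curve by a subcurve of length at
    -- most `M'·η·μ + 2·η·μ`; consequently the curve satisfies the `η*`-elementary
    -- boundary estimate with `η* = 2(M'η + 2η)·μ/μ₀`, `μ₀ = μ/2`, for pairs of points
    -- that are at distance at least `μ₀` (points within distance `μ` are handled by the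
    -- local Lipschitz property directly).
    (∀ s ∈ Set.Icc (0:ℝ) L, ∀ w ∈ Set.Icc (0:ℝ) L,
      min |s - w| (L - |s - w|) ≤ M' * η * μ + 2 * η * μ) ∧
    (∀ s ∈ Set.Icc (0:ℝ) L, ∀ w ∈ Set.Icc (0:ℝ) L,
      μ / 2 ≤ dist (γ s) (γ w) →
        min |s - w| (L - |s - w|)
          ≤ (2 * ((M':ℝ) * η + 2 * η) * μ / (μ / 2)) * dist (γ s) (γ w)) := by
  have hbound : ∀ s ∈ Icc (0:ℝ) L, ∀ w ∈ Icc (0:ℝ) L,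
      arcDist L s w ≤ M' * η * μ + 2 * η * μ := fun s hs w hw => by
    have := IsLocallyArcLipschitz.arcDist_le_card_mul hlip hη.le hμ hXsub hnet hchain hs hw
    rw [hcard] at this
    linarith [mul_pos hη hμ]
  refine ⟨hbound, fun s hs w hw hsw => ?_⟩
  have hK : 2 * ((M':ℝ) * η + 2 * η) * μ / (μ / 2) = 4 * (M' * η + 2 * η) := by
    field_simp
    ring
  have hKμ : 0 ≤ (M' * η + 2 * η) * μ := by positivity
  calc arcDist L s w ≤ (M' * η + 2 * η) * μ := by linarith [hbound s hs w hw]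
    _ ≤ 4 * (M' * η + 2 * η) * (μ / 2) := by linarith
    _ ≤ _ := by rw [hK]; gcongr

theorem stmt14 (L μ η : ℝ) (hL : 0 < L) (hμ : 0 < μ) (hη : 0 < η)
    (γ : ℝ → E2) (hγ : ContinuousOn γ (Set.Icc 0 L))
    -- `γ` is parametrized by arc length and is `μ`-locally `η`-Lipschitz: the arc-length
    -- distance along the (closed) curve between two points at Euclidean distance `< μ`
    -- is at most `η` times their Euclidean distance.
    (hlip : ∀ s ∈ Set.Icc (0:ℝ) L, ∀ t ∈ Set.Icc (0:ℝ) L,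
      dist (γ s) (γ t) < μ → min |s - t| (L - |s - t|) ≤ η * dist (γ s) (γ t))
    (M' : ℕ) (X : Finset E2) (hcard : X.card = M')
    (hXsub : (X : Set E2) ⊆ γ '' Set.Icc 0 L)
    -- `X` is a `μ/2`-net of the curve
    (hnet : ∀ p ∈ γ '' Set.Icc 0 L, ∃ x ∈ X, dist p x ≤ μ / 2)
    -- any two points of `X` are joined by a chain in `X` with steps `< μ`
    (hchain : ∀ x ∈ X, ∀ y ∈ X, ∃ (k : ℕ) (c : Fin (k + 1) → E2),
      (∀ i, c i ∈ X) ∧ c 0 = x ∧ c (Fin.last k) = y ∧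
        ∀ i : Fin k, dist (c i.castSucc) (c i.succ) < μ) :
    -- any two points of the curve are joined along the curve by a subcurve of length at
    -- most `M'·η·μ + 2·η·μ`; consequently the curve satisfies the `η*`-elementary
    -- boundary estimate with `η* = 2(M'η + 2η)·μ/μ₀`, `μ₀ = μ/2`, for pairs of points
    -- that are at distance at least `μ₀` (points within distance `μ` are handled by the
    -- local Lipschitz property directly).
    (∀ s ∈ Set.Icc (0:ℝ) L, ∀ w ∈ Set.Icc (0:ℝ) L,
      min |s - w| (L - |s - w|) ≤ M' * η * μ + 2 * η * μ) ∧
    (∀ s ∈ Set.Icc (0:ℝ) L, ∀ w ∈ Set.Icc (0:ℝ) L,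
      μ / 2 ≤ dist (γ s) (γ w) →
        min |s - w| (L - |s - w|)
          ≤ (2 * ((M':ℝ) * η + 2 * η) * μ / (μ / 2)) * dist (γ s) (γ w)) :=
  stmt14_general L μ η hμ hη γ hlip M' X hcard hXsub hnet hchain
end
end
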